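/- arXiv:1911.07148 — 3 statements merged into one kernel-verified Lean document; each statement's English description precedes it below -/
import Mathlib

section
/- Let k be an integer, N a positive integer, and f : ℍ → ℂ a function such that f(γτ) = (cτ+d)^k f(τ) for every γ = (a b; c d) in Γ₁(N) with gcd(a,6) = 1 and ac > 0. Then f(γτ) = (cτ+d)^k f(τ) for every γ in Γ₁(N). -/
open Matrix UpperHalfPlane
open scoped MatrixGroups

open ModularForm ModularGroup CongruenceSubgroup

/-!
The γ with `f ∣[k] γ = f` form a subgroup of `SL(2, ℤ)`, so it suffices that the elements of
Γ₁(N) with `gcd(a, 6) = 1` and `ac > 0` generate Γ₁(N). Left multiplication by `T ^ s` replaces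
`a` by `a + cs`, which Dirichlet's theorem makes a prime larger than 6. Left multiplication by
`(1 0; Nm 1)`, itself such an element for `m > 0`, replaces `c` by `c + Nma`, and then
`a (c + Nma) > 0` once `m > |ac|`.
-/

theorem Int.exists_add_mul_ne_zero_gcd_eq_one {a c : ℤ} (h : IsCoprime a c) {n : ℕ}
    (hn : n ≠ 0) : ∃ s : ℤ, a + c * s ≠ 0 ∧ Int.gcd (a + c * s) n = 1 := by
  rcases eq_or_ne c 0 with rfl | hc
  · rcases Int.isUnit_iff.1 (isCoprime_zero_right.1 h) with rfl | rfl <;> exact ⟨0, by simp⟩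
  · obtain ⟨p, hpn, hp, hpa⟩ :=
      Nat.forall_exists_prime_gt_and_zmodEq n (Int.natAbs_ne_zero.2 hc)
        (by simpa using h.abs_right)
    obtain ⟨s, hs⟩ := Int.natAbs_dvd.1 hpa.symm.dvd
    have hps : a + c * s = p := by linarith
    refine ⟨s, hps ▸ Int.natCast_ne_zero.2 hp.ne_zero, ?_⟩
    rw [hps, Int.gcd_natCast_natCast]
    exact hp.coprime_iff_not_dvd.2 (Nat.not_dvd_of_pos_of_lt (Nat.pos_of_ne_zero hn) hpn)

def SlashAction.stabilizer {β α : Type*} (G : Type*) [Group G] [AddMonoid α]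
    [SlashAction β G α] (k : β) (a : α) : Subgroup G where
  carrier := {g | a ∣[k] g = a}
  one_mem' := SlashAction.slash_one k a
  mul_mem' {g h} (hg : a ∣[k] g = a) (hh : a ∣[k] h = a) := by
    change a ∣[k] (g * h) = a
    rw [SlashAction.slash_mul, hg, hh]
  inv_mem' {g} (hg : a ∣[k] g = a) := by
    change a ∣[k] g⁻¹ = a
    conv_lhs => rw [← hg]
    rw [← SlashAction.slash_mul, mul_inv_cancel, SlashAction.slash_one]

theorem ModularForm.SL_mem_stabilizer_iff (k : ℤ) (f : ℍ → ℂ) (γ : SL(2, ℤ)) :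
    γ ∈ SlashAction.stabilizer SL(2, ℤ) k f ↔
      ∀ τ : ℍ, f (γ • τ) = ((γ 1 0 : ℂ) * (τ : ℂ) + (γ 1 1 : ℂ)) ^ k * f τ :=
  funext_iff.trans (forall_congr' fun τ ↦ slash_action_eq'_iff k f γ τ)

namespace CongruenceSubgroup

def lowerUnipotent (c : ℤ) : SL(2, ℤ) :=
  ⟨!![1, 0; c, 1], by simp [det_fin_two_of]⟩

theorem coe_lowerUnipotent (c : ℤ) :
    (lowerUnipotent c : Matrix (Fin 2) (Fin 2) ℤ) = !![1, 0; c, 1] :=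
  rfl

theorem lowerUnipotent_mul_apply_zero (c : ℤ) (γ : SL(2, ℤ)) (j : Fin 2) :
    (lowerUnipotent c * γ) 0 j = γ 0 j := by
  simp [coe_lowerUnipotent, Matrix.mul_apply, Fin.sum_univ_two]

theorem lowerUnipotent_mul_apply_one_zero (c : ℤ) (γ : SL(2, ℤ)) :
    (lowerUnipotent c * γ) 1 0 = c * γ 0 0 + γ 1 0 := by
  simp [coe_lowerUnipotent, Matrix.mul_apply, Fin.sum_univ_two]

theorem lowerUnipotent_mem_Gamma1 (N : ℕ) (m : ℤ) : lowerUnipotent (N * m) ∈ Gamma1 N := by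
  simp [coe_lowerUnipotent]

theorem T_zpow_mem_Gamma1 (N : ℕ) (s : ℤ) : T ^ s ∈ Gamma1 N := by
  simp [coe_T_zpow]

def gamma1PosCoprime (N n : ℕ) : Set SL(2, ℤ) :=
  {γ | γ ∈ Gamma1 N ∧ Int.gcd (γ 0 0) n = 1 ∧ 0 < γ 0 0 * γ 1 0}

variable {N n : ℕ}

theorem lowerUnipotent_mem_gamma1PosCoprime (hN : 0 < N) {m : ℤ} (hm : 0 < m) :
    lowerUnipotent (N * m) ∈ gamma1PosCoprime N n :=
  ⟨lowerUnipotent_mem_Gamma1 N m, by simp [coe_lowerUnipotent], by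
    simpa [coe_lowerUnipotent] using mul_pos (Int.natCast_pos.2 hN) hm⟩

theorem mem_closure_gamma1PosCoprime (hN : 0 < N) {γ : SL(2, ℤ)} (hγ : γ ∈ Gamma1 N)
    (ha : γ 0 0 ≠ 0) (hgcd : Int.gcd (γ 0 0) n = 1) :
    γ ∈ Subgroup.closure (gamma1PosCoprime N n) := by
  set m := |γ 0 0 * γ 1 0| + 1
  set L := lowerUnipotent (N * m)
  have hL : L ∈ gamma1PosCoprime N n := lowerUnipotent_mem_gamma1PosCoprime hN (by positivity)
  have hLγ : L * γ ∈ gamma1PosCoprime N n := by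
    refine ⟨mul_mem hL.1 hγ, by rwa [lowerUnipotent_mul_apply_zero], ?_⟩
    rw [lowerUnipotent_mul_apply_zero, lowerUnipotent_mul_apply_one_zero]
    have hNa : 1 ≤ (N : ℤ) * γ 0 0 ^ 2 := one_le_mul_of_one_le_of_one_le
      (by exact_mod_cast hN) (Order.one_le_iff_pos.2 (pow_two_pos_of_ne_zero ha))
    calc 0 < m + γ 0 0 * γ 1 0 := by linarith [neg_abs_le (γ 0 0 * γ 1 0)]
      _ ≤ m * (N * γ 0 0 ^ 2) + γ 0 0 * γ 1 0 := by
        gcongr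
        exact le_mul_of_one_le_right (by positivity) hNa
      _ = γ 0 0 * (N * m * γ 0 0 + γ 1 0) := by ring
  simpa using mul_mem (inv_mem (Subgroup.subset_closure hL)) (Subgroup.subset_closure hLγ)

theorem Gamma1_le_closure_gamma1PosCoprime (hN : 0 < N) (hn : n ≠ 0) :
    Gamma1 N ≤ Subgroup.closure (gamma1PosCoprime N n) := by
  intro γ hγ
  obtain ⟨s, hs0, hs⟩ := Int.exists_add_mul_ne_zero_gcd_eq_one (γ.isCoprime_col 0) hn
  have hTγ : (T ^ s * γ) 0 0 = γ 0 0 + γ 1 0 * s := by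
    simp [coe_T_zpow, Matrix.mul_apply, Fin.sum_univ_two]
    ring
  have hT : T ^ (-s) ∈ Subgroup.closure (gamma1PosCoprime N n) :=
    mem_closure_gamma1PosCoprime hN (T_zpow_mem_Gamma1 N _) (by simp [coe_T_zpow])
      (by simp [coe_T_zpow])
  have hTγ_mem : T ^ s * γ ∈ Subgroup.closure (gamma1PosCoprime N n) :=
    mem_closure_gamma1PosCoprime hN (mul_mem (T_zpow_mem_Gamma1 N s) hγ) (hTγ ▸ hs0) (hTγ ▸ hs)
  simpa [← mul_assoc, ← _root_.zpow_add] using mul_mem hT hTγ_mem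

end CongruenceSubgroup

theorem invariance_from_star (k : ℤ) (N : ℕ) (hN : 0 < N) (f : ℍ → ℂ)
    (h : ∀ γ : SL(2, ℤ), γ ∈ CongruenceSubgroup.Gamma1 N →
      Int.gcd (γ.1 0 0) 6 = 1 → 0 < γ.1 0 0 * γ.1 1 0 →
      ∀ τ : ℍ, f (γ • τ) = ((γ.1 1 0 : ℂ) * (τ : ℂ) + (γ.1 1 1 : ℂ)) ^ k * f τ) :
    ∀ γ : SL(2, ℤ), γ ∈ CongruenceSubgroup.Gamma1 N →
      ∀ τ : ℍ, f (γ • τ) = ((γ.1 1 0 : ℂ) * (τ : ℂ) + (γ.1 1 1 : ℂ)) ^ k * f τ := by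
  have hstar : gamma1PosCoprime N 6 ⊆ SlashAction.stabilizer SL(2, ℤ) k f :=
    fun γ hγ ↦ (SL_mem_stabilizer_iff k f γ).2 (h γ hγ.1 hγ.2.1 hγ.2.2)
  have hGamma1 : Gamma1 N ≤ SlashAction.stabilizer SL(2, ℤ) k f :=
    (Gamma1_le_closure_gamma1PosCoprime hN (by norm_num)).trans ((Subgroup.closure_le _).2 hstar)
  exact fun γ hγ ↦ (SL_mem_stabilizer_iff k f γ).1 (hGamma1 hγ)
end

section
/- Γ₁(N) is generated by the set of matrices (a b; c d) in Γ₁(N) with gcd(a, 6) = 1. -/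
open Matrix
open scoped MatrixGroups

lemma zmod6_aux : ∀ x y : ZMod 6, (∃ u v : ZMod 6, u * x + v * y = 1) →
    ∃ k : ZMod 6, IsUnit (x + k * y) := by decide

lemma gcd_six_of_isUnit (x : ℤ) (h : IsUnit ((x : ZMod 6))) : Int.gcd x 6 = 1 := by
  have h2 : IsUnit ((x.natAbs : ZMod 6)) := by
    rcases Int.natAbs_eq x with he | he
    · rw [he, Int.cast_natCast] at h; exact h
    · rw [he, Int.cast_neg, Int.cast_natCast] at h; simpa using h.neg
  rw [ZMod.isUnit_iff_coprime] at h2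
  simpa [Int.gcd] using h2

lemma exists_coprime_six (a m : ℤ) (h : IsCoprime a m) :
    ∃ k : ℤ, Int.gcd (a + k * m) 6 = 1 := by
  have h6 : IsCoprime (a : ZMod 6) (m : ZMod 6) := h.map (Int.castRingHom (ZMod 6))
  obtain ⟨u, v, huv⟩ := h6
  obtain ⟨k, hk⟩ := zmod6_aux _ _ ⟨u, v, huv⟩
  refine ⟨(k.val : ℤ), gcd_six_of_isUnit _ ?_⟩
  have hc : ((a + (k.val : ℤ) * m : ℤ) : ZMod 6) = (a : ZMod 6) + k * (m : ZMod 6) := by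
    push_cast
    rw [ZMod.natCast_val, ZMod.cast_id]
  rw [hc]; exact hk

theorem gamma1_generated_by_gcd_six_coprime (N : ℕ) :
    Subgroup.closure
        {γ : SL(2, ℤ) | γ ∈ CongruenceSubgroup.Gamma1 N ∧ Int.gcd (γ.1 0 0) 6 = 1}
      = CongruenceSubgroup.Gamma1 N := by
  apply le_antisymm
  · rw [Subgroup.closure_le]
    exact fun x hx => hx.1
  · intro γ hγ
    set a := γ.1 0 0 with ha
    set b := γ.1 0 1 with hb
    have hdet : a * (γ.1 1 1) - b * (γ.1 1 0) = 1 := by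
      have := γ.2
      rw [Matrix.det_fin_two] at this
      rw [ha, hb]; linarith
    have hab : IsCoprime a b := ⟨γ.1 1 1, -(γ.1 1 0), by linarith⟩
    have haN : IsCoprime a (N : ℤ) := by
      have h1 : ((a - 1 : ℤ) : ZMod N) = 0 := by
        have := ((CongruenceSubgroup.Gamma1_mem N γ).mp hγ).1
        push_cast
        rw [ha]
        simp [this]
      rw [ZMod.intCast_zmod_eq_zero_iff_dvd] at h1
      obtain ⟨t, ht⟩ := h1
      exact ⟨1, -t, by linarith⟩
    obtain ⟨k, hk⟩ := exists_coprime_six a (b * N) (hab.mul_right haN)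
    set L : SL(2, ℤ) := ⟨!![1, 0; k * N, 1], by simp [Matrix.det_fin_two_of]⟩ with hL
    have hLmem : L ∈ CongruenceSubgroup.Gamma1 N := by
      rw [CongruenceSubgroup.Gamma1_mem]
      simp [hL]
    have hLS : L ∈ {γ : SL(2, ℤ) | γ ∈ CongruenceSubgroup.Gamma1 N ∧
        Int.gcd (γ.1 0 0) 6 = 1} := by
      refine ⟨hLmem, ?_⟩
      simp [hL]
    have hmul00 : ((γ * L).1 : Matrix (Fin 2) (Fin 2) ℤ) 0 0 = a + k * (b * N) := by
      simp only [Matrix.SpecialLinearGroup.coe_mul]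
      rw [Matrix.mul_apply, Fin.sum_univ_two]
      simp [hL, ha, hb]
      ring
    have hγLS : γ * L ∈ {γ : SL(2, ℤ) | γ ∈ CongruenceSubgroup.Gamma1 N ∧
        Int.gcd (γ.1 0 0) 6 = 1} := by
      refine ⟨mul_mem hγ hLmem, ?_⟩
      rw [hmul00]
      exact hk
    have := mul_mem (Subgroup.subset_closure hγLS) (inv_mem (Subgroup.subset_closure hLS))
    simpa using this
end

section
/- The overpartition function satisfies the congruence p̄(5n+2) ≡ 0 (mod 4) for all n ≥ 0. -/
open PowerSeries

/-- The infinite product `(q^a; q^b)_∞ = ∏_{n≥0} (1 - q^{a+bn})` as a formal power series: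
its `d`-th coefficient is that of any sufficiently long finite truncation of the product. -/
noncomputable def qpoch (a b : ℕ) : PowerSeries ℚ :=
  PowerSeries.mk fun d =>
    PowerSeries.coeff d
      (∏ n ∈ Finset.range (d + 1), (1 - (X : PowerSeries ℚ) ^ (a + b * n)))

/-- `(q^a; q^b)_∞` viewed as a formal Laurent series. -/
noncomputable def E (a b : ℕ) : LaurentSeries ℚ := (qpoch a b : LaurentSeries ℚ)

/-- `q` as a formal Laurent series. -/
noncomputable def Lq : LaurentSeries ℚ := ((X : PowerSeries ℚ) : LaurentSeries ℚ)

/-!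
Since `(q²;q²)_∞ = (q;q)_∞ (-q;q)_∞`, the generating function of `p̄` is
`∏ (1 + qⁿ)/(1 - qⁿ) = ∏ (1 + 2qⁿ/(1 - qⁿ))`, and modulo `4` this product collapses to
`1 + 2 ∑ qⁿ/(1 - qⁿ) = 1 + 2 ∑ σ₀(m) qᵐ`. The divisors of `m` pair off as `k ↔ m/k`, so `σ₀(m)`
is even unless `m` is a square; and `5n + 2` is never a square, squares being `0, ±1 mod 5`.
-/

open Finset Ideal

section CongruenceModXPow

variable {R : Type*} [CommRing R]

theorem coeff_eq_of_sModEq_X_pow {f g : R⟦X⟧} {d i : ℕ}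
    (h : f ≡ g [SMOD span {(X : R⟦X⟧) ^ (d + 1)}]) (hi : i ≤ d) : coeff i f = coeff i g := by
  rw [SModEq.sub_mem, mem_span_singleton, X_pow_dvd_iff] at h
  simpa [sub_eq_zero] using h i (by omega)

theorem sModEq_of_forall_coeff_eq {f g : R⟦X⟧} {d : ℕ} (h : ∀ i ≤ d, coeff i f = coeff i g) :
    f ≡ g [SMOD span {(X : R⟦X⟧) ^ (d + 1)}] := by
  rw [SModEq.sub_mem, mem_span_singleton, X_pow_dvd_iff]
  intro i hi
  rw [map_sub, h i (by omega), sub_self]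

theorem X_pow_sModEq_zero {k m : ℕ} (h : k ≤ m) :
    (X : R⟦X⟧) ^ m ≡ 0 [SMOD span {(X : R⟦X⟧) ^ k}] := by
  rw [SModEq.zero, mem_span_singleton]
  exact pow_dvd_pow X h

theorem SModEq.of_isUnit_mul {I : Ideal R} {u x y : R} (hu : IsUnit u)
    (h : u * x ≡ u * y [SMOD I]) : x ≡ y [SMOD I] := by
  obtain ⟨v, rfl⟩ := hu
  simpa [← mul_assoc] using (SModEq.refl (↑v⁻¹ : R)).mul h

end CongruenceModXPow

section QPochhammer

variable (R : Type*) [CommRing R]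

noncomputable def qPochhammer (a b : ℕ) : R⟦X⟧ :=
  mk fun d => coeff d (∏ n ∈ range (d + 1), (1 - (X : R⟦X⟧) ^ (a + b * n)))

theorem qpoch_eq_qPochhammer (a b : ℕ) : qpoch a b = qPochhammer ℚ a b := rfl

variable {R}

theorem map_qPochhammer {S : Type*} [CommRing S] (f : R →+* S) (a b : ℕ) :
    map f (qPochhammer R a b) = qPochhammer S a b := by
  ext d
  rw [qPochhammer, qPochhammer, coeff_map, coeff_mk, coeff_mk, ← coeff_map, map_prod]
  simp

theorem constantCoeff_qPochhammer {a : ℕ} (ha : a ≠ 0) (b : ℕ) :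
    constantCoeff (qPochhammer R a b) = 1 := by
  rw [← coeff_zero_eq_constantCoeff_apply, qPochhammer, coeff_mk,
    coeff_zero_eq_constantCoeff_apply, map_prod]
  simp [ha]

theorem prod_range_one_sub_X_pow_sModEq {e : ℕ → ℕ} {k M M' : ℕ} (hM : M ≤ M')
    (he : ∀ n, M ≤ n → k ≤ e n) :
    ∏ n ∈ range M', (1 - (X : R⟦X⟧) ^ e n) ≡ ∏ n ∈ range M, (1 - X ^ e n)
      [SMOD span {(X : R⟦X⟧) ^ k}] := by
  rw [← prod_range_mul_prod_Ico _ hM]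
  conv_rhs => rw [← mul_one (∏ n ∈ range M, _)]
  refine SModEq.rfl.mul ?_
  calc ∏ n ∈ Ico M M', (1 - (X : R⟦X⟧) ^ e n)
      ≡ ∏ n ∈ Ico M M', (1 - 0) [SMOD span {(X : R⟦X⟧) ^ k}] :=
        SModEq.prod fun n hn => SModEq.rfl.sub (X_pow_sModEq_zero (he n (mem_Ico.1 hn).1))
    _ = 1 := by simp

theorem qPochhammer_sModEq_prod_range {a b d M : ℕ} (ha : a ≠ 0) (hb : b ≠ 0) (hM : d ≤ M) :
    qPochhammer R a b ≡ ∏ n ∈ range M, (1 - (X : R⟦X⟧) ^ (a + b * n))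
      [SMOD span {(X : R⟦X⟧) ^ (d + 1)}] := by
  refine sModEq_of_forall_coeff_eq fun i hi => ?_
  have stable : ∀ M', i ≤ M' → coeff i (∏ n ∈ range M', (1 - (X : R⟦X⟧) ^ (a + b * n)))
      = coeff i (∏ n ∈ range i, (1 - (X : R⟦X⟧) ^ (a + b * n))) := fun M' hM' =>
    coeff_eq_of_sModEq_X_pow (prod_range_one_sub_X_pow_sModEq hM' fun n hn => by
      nlinarith [Nat.pos_of_ne_zero ha, Nat.pos_of_ne_zero hb]) le_rfl
  rw [qPochhammer, coeff_mk, stable (i + 1) (by omega), stable M (by omega)]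

end QPochhammer

section ModFour

variable {R : Type*} [CommRing R]

theorem prod_one_add_two_mul (h4 : (4 : R) = 0) {ι : Type*} (s : Finset ι) (f : ι → R) :
    ∏ i ∈ s, (1 + 2 * f i) = 1 + 2 * ∑ i ∈ s, f i := by
  induction s using Finset.cons_induction with
  | empty => simp
  | cons i s _ ih =>
    rw [prod_cons, sum_cons, ih]
    linear_combination (f i * ∑ j ∈ s, f j) * h4

/-- `(1 + x) / (1 - x) = 1 + 2x / (1 - x)` for `x = X ^ k`, with `x / (1 - x)` truncated. -/
theorem one_add_X_pow_sModEq {k : ℕ} (hk : k ≠ 0) (d : ℕ) :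
    (1 + X ^ k : R⟦X⟧) ≡ (1 - X ^ k) * (1 + 2 * ∑ j ∈ range d, X ^ (k * (j + 1)))
      [SMOD span {(X : R⟦X⟧) ^ (d + 1)}] := by
  have geom : (1 - X ^ k) * ∑ j ∈ range d, (X : R⟦X⟧) ^ (k * (j + 1))
      = X ^ k - X ^ (k * (d + 1)) := by
    have : ∑ j ∈ range d, (X : R⟦X⟧) ^ (k * (j + 1)) = X ^ k * ∑ j ∈ range d, (X ^ k) ^ j := by
      rw [mul_sum]
      exact sum_congr rfl fun j _ => by ring
    rw [this]
    linear_combination X ^ k * mul_neg_geom_sum ((X : R⟦X⟧) ^ k) d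
  have hrhs : (1 - X ^ k) * (1 + 2 * ∑ j ∈ range d, (X : R⟦X⟧) ^ (k * (j + 1)))
      = 1 + X ^ k - 2 * X ^ (k * (d + 1)) := by
    linear_combination 2 * geom
  rw [hrhs]
  calc (1 + X ^ k : R⟦X⟧) = 1 + X ^ k - 2 * 0 := by ring
    _ ≡ 1 + X ^ k - 2 * X ^ (k * (d + 1)) [SMOD span {(X : R⟦X⟧) ^ (d + 1)}] :=
      SModEq.rfl.sub (SModEq.rfl.mul
        (X_pow_sModEq_zero (Nat.le_mul_of_pos_left _ (Nat.pos_of_ne_zero hk))).symm)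

/-- The `d`-th coefficient counts the factorisations `d = k * j`; swapping `k` and `j` pairs
them off unless `d` is a square. -/
theorem coeff_two_mul_sum_X_pow_mul_of_not_isSquare (h4 : (4 : R) = 0) {d : ℕ}
    (hd : ¬ IsSquare d) :
    coeff d (2 * ∑ k ∈ range d, ∑ j ∈ range d, (X : R⟦X⟧) ^ ((k + 1) * (j + 1))) = 0 := by
  rw [show (2 : R⟦X⟧) = C 2 from (map_ofNat C 2).symm, coeff_C_mul, ← sum_product', map_sum,
    mul_sum]
  simp only [coeff_X_pow]
  refine sum_involution (fun p _ => p.swap) (fun ⟨k, j⟩ _ => ?_) (fun ⟨k, j⟩ _ hp => ?_)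
    (fun p hp => by simpa [and_comm] using hp) (fun p _ => p.swap_swap)
  · rw [Prod.swap_prod_mk, mul_comm (j + 1), ← mul_add, ← two_mul, ← mul_assoc]
    linear_combination (if d = (k + 1) * (j + 1) then (1 : R) else 0) * h4
  · rintro hswap
    obtain rfl : j = k := congrArg Prod.fst hswap
    split_ifs at hp with hsq
    · exact hd ⟨_, hsq⟩
    · simp at hp

theorem coeff_eq_zero_of_mul_qPochhammer_sq_eq (h4 : (4 : R) = 0) {P : R⟦X⟧}
    (hP : P * qPochhammer R 1 1 ^ 2 = qPochhammer R 2 2) {d : ℕ} (hd0 : d ≠ 0)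
    (hd : ¬ IsSquare d) : coeff d P = 0 := by
  set I := span {(X : R⟦X⟧) ^ (d + 1)}
  set F := ∏ n ∈ range d, (1 - (X : R⟦X⟧) ^ (n + 1))
  set S := ∑ k ∈ range d, ∑ j ∈ range d, (X : R⟦X⟧) ^ ((k + 1) * (j + 1))
  have hF : qPochhammer R 1 1 ≡ F [SMOD I] := by
    simpa [add_comm] using qPochhammer_sModEq_prod_range (R := R) one_ne_zero one_ne_zero le_rfl
  have h4X : (4 : R⟦X⟧) = 0 := by rw [← map_ofNat C 4, h4, map_zero]
  have hG : qPochhammer R 2 2 ≡ F * (F * (1 + 2 * S)) [SMOD I] := calc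
    qPochhammer R 2 2 ≡ ∏ n ∈ range d, (1 - (X : R⟦X⟧) ^ (2 + 2 * n)) [SMOD I] :=
      qPochhammer_sModEq_prod_range two_ne_zero two_ne_zero le_rfl
    _ = F * ∏ n ∈ range d, (1 + (X : R⟦X⟧) ^ (n + 1)) := by
      rw [← prod_mul_distrib]
      exact prod_congr rfl fun n _ => by ring
    _ ≡ F * ∏ n ∈ range d,
          ((1 - X ^ (n + 1)) * (1 + 2 * ∑ j ∈ range d, X ^ ((n + 1) * (j + 1)))) [SMOD I] :=
      SModEq.rfl.mul (SModEq.prod fun n _ => one_add_X_pow_sModEq n.succ_ne_zero d)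
    _ = F * (F * (1 + 2 * S)) := by rw [prod_mul_distrib, prod_one_add_two_mul h4X]
  have hFunit : IsUnit (F * F) := by
    rw [isUnit_iff_constantCoeff, map_mul, map_prod]
    simp
  have hP' : P ≡ 1 + 2 * S [SMOD I] := by
    refine SModEq.of_isUnit_mul hFunit ?_
    calc F * F * P = P * F ^ 2 := by ring
      _ ≡ P * qPochhammer R 1 1 ^ 2 [SMOD I] := SModEq.rfl.mul (hF.symm.pow 2)
      _ = qPochhammer R 2 2 := hP
      _ ≡ F * (F * (1 + 2 * S)) [SMOD I] := hG
      _ = F * F * (1 + 2 * S) := by ring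
  rw [coeff_eq_of_sModEq_X_pow hP' le_rfl, map_add,
    coeff_two_mul_sum_X_pow_mul_of_not_isSquare h4 hd, coeff_one, if_neg hd0, add_zero]

end ModFour

theorem not_isSquare_five_mul_add_two (n : ℕ) : ¬ IsSquare (5 * n + 2) := by
  rintro ⟨r, hr⟩
  have hsq : (r : ZMod 5) * r = 2 := by
    have := congrArg (Nat.cast : ℕ → ZMod 5) hr
    push_cast at this
    rw [← this, show (5 : ZMod 5) = 0 from rfl, zero_mul, zero_add]
  have no_sqrt_two : ∀ x : ZMod 5, x * x ≠ 2 := by decide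
  exact no_sqrt_two r hsq

theorem mul_qPochhammer_sq_eq_of_coe_eq_div (pbar : ℕ → ℤ)
    (hgen : ((PowerSeries.mk (fun n => (pbar n : ℚ)) : PowerSeries ℚ) : LaurentSeries ℚ)
      = E 2 2 / E 1 1 ^ 2) :
    mk pbar * qPochhammer ℤ 1 1 ^ 2 = qPochhammer ℤ 2 2 := by
  have hE : E 1 1 ≠ 0 := by
    rw [E, qpoch_eq_qPochhammer, Ne, map_eq_zero_iff _ HahnSeries.ofPowerSeries_injective]
    intro h
    simpa [h] using constantCoeff_qPochhammer (R := ℚ) one_ne_zero 1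
  have hℚ : mk (fun n => (pbar n : ℚ)) * qpoch 1 1 ^ 2 = qpoch 2 2 := by
    apply HahnSeries.ofPowerSeries_injective (Γ := ℤ)
    rw [map_mul, map_pow]
    change _ * E 1 1 ^ 2 = E 2 2
    rw [hgen, div_mul_cancel₀ _ (pow_ne_zero 2 hE)]
  apply map_injective (Int.castRingHom ℚ) Int.cast_injective
  rw [map_mul, map_pow, map_qPochhammer, map_qPochhammer, ← qpoch_eq_qPochhammer,
    ← qpoch_eq_qPochhammer, ← hℚ]
  rfl

theorem overpartition_five_n_two_mod_four (pbar : ℕ → ℤ)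
    (hgen : ((PowerSeries.mk (fun n => (pbar n : ℚ)) : PowerSeries ℚ) : LaurentSeries ℚ)
      = E 2 2 / E 1 1 ^ 2) :
    ∀ n : ℕ, (4 : ℤ) ∣ pbar (5 * n + 2) := by
  have hmod4 := congrArg (PowerSeries.map (Int.castRingHom (ZMod 4)))
    (mul_qPochhammer_sq_eq_of_coe_eq_div pbar hgen)
  rw [map_mul, map_pow, map_qPochhammer, map_qPochhammer] at hmod4
  intro n
  have hcoeff := coeff_eq_zero_of_mul_qPochhammer_sq_eq (by decide) hmod4 (by omega)
    (not_isSquare_five_mul_add_two n)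
  rw [coeff_map, coeff_mk] at hcoeff
  exact (ZMod.intCast_zmod_eq_zero_iff_dvd _ 4).1 hcoeff
end
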